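/- Let X ~ CN(0,ρ) and, given X, let Y = hX + W with W ~ CN(0,σ²) independent of X, for fixed complex numbers h, ĥ and reals ρ, σ², s > 0. Define the generalized information density ι_s(X;Y,ĥ) = −s|Y − ĥX|² + s|Y|²/(1 + sρ|ĥ|²) + log(1 + sρ|ĥ|²). Then E[ι_s(X;Y,ĥ)] = log(1 + sρ|ĥ|²) + β − α, where α = s(ρ|h − ĥ|² + σ²) and β = s(ρ|h|² + σ²)/(1 + sρ|ĥ|²). -/

import Mathlib

open MeasureTheory ProbabilityTheory

open Real Set Filter Asymptotics
open scoped NNReal ENNReal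


lemma myOdd_integral_zero {b : ℝ} (hb : 0 < b) :
    ∫ x : ℝ, x * Real.exp (-b * x ^ 2) = 0 := by
  have h1 := integral_neg_eq_self (fun y : ℝ => y * Real.exp (-b * y ^ 2)) (volume : Measure ℝ)
  simp only [neg_sq, neg_mul] at h1
  rw [integral_neg] at h1
  simp only [neg_mul]
  linarith

lemma myInt_sq : ∀ {b : ℝ}, 0 < b → Integrable (fun x : ℝ => x ^ 2 * Real.exp (-b * x ^ 2)) := by
  intro b hb
  have := integrable_rpow_mul_exp_neg_mul_sq hb (s := 2) (by norm_num)
  simpa [Real.rpow_natCast] using this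

lemma mySqMoment {b : ℝ} (hb : 0 < b) :
    ∫ x : ℝ, x ^ 2 * Real.exp (-b * x ^ 2) = Real.sqrt (π / b) / (2 * b) := by
  set f : ℝ → ℝ := fun x => (-(2*b))⁻¹ * (x * Real.exp (-b * x ^ 2)) with hf
  have hderiv : ∀ x : ℝ, HasDerivAt f
      ((-(2*b))⁻¹ * Real.exp (-b * x ^ 2) + x ^ 2 * Real.exp (-b * x ^ 2)) x := by
    intro x
    have h1 : HasDerivAt (fun x : ℝ => -b * x ^ 2) (-b * (2 * x)) x := by
      simpa using (hasDerivAt_pow 2 x).const_mul (-b)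
    have h2 : HasDerivAt (fun x : ℝ => Real.exp (-b * x ^ 2))
        (Real.exp (-b * x ^ 2) * (-b * (2 * x))) x := h1.exp
    have h3 : HasDerivAt (fun x : ℝ => x * Real.exp (-b * x ^ 2))
        (1 * Real.exp (-b * x ^ 2) + x * (Real.exp (-b * x ^ 2) * (-b * (2 * x)))) x :=
      (hasDerivAt_id x).mul h2
    have h4 := h3.const_mul ((-(2*b))⁻¹)
    refine h4.congr_deriv ?_
    have hb0 : (-(2*b)) ≠ 0 := neg_ne_zero.mpr (by positivity)
    rw [mul_add, show x * (Real.exp (-b * x ^ 2) * (-b * (2 * x)))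
      = (-(2*b)) * (x ^ 2 * Real.exp (-b * x ^ 2)) by ring, inv_mul_cancel_left₀ hb0]
    ring
  have hint : Integrable (fun x : ℝ =>
      (-(2*b))⁻¹ * Real.exp (-b * x ^ 2) + x ^ 2 * Real.exp (-b * x ^ 2)) :=
    ((integrable_exp_neg_mul_sq hb).const_mul _).add (myInt_sq hb)
  have htop : Tendsto f atTop (nhds 0) := by
    have ho : (fun x : ℝ => x * Real.exp (-b * x ^ 2)) =o[atTop]
        fun x : ℝ => Real.exp (-(1/2) * x) := by
      have := rpow_mul_exp_neg_mul_sq_isLittleO_exp_neg hb 1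
      simpa [Real.rpow_one] using this
    have hhalf : Tendsto (fun x : ℝ => -(1/2) * x) atTop atBot :=
      tendsto_id.const_mul_atTop_of_neg (by norm_num : (-(1/2) : ℝ) < 0)
    have h0 : Tendsto (fun x : ℝ => Real.exp (-(1/2) * x)) atTop (nhds 0) :=
      Real.tendsto_exp_atBot.comp hhalf
    have := (ho.isBigO.trans_tendsto h0).const_mul ((-(2*b))⁻¹)
    simpa [hf, mul_zero] using this
  have hbot : Tendsto f atBot (nhds 0) := by
    have : Tendsto (fun x : ℝ => f (-x)) atTop (nhds 0) := by
      have := htop.neg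
      simp only [hf, neg_sq, neg_mul, mul_neg, neg_neg, neg_zero] at this ⊢
      convert this using 2 with x
    have := this.comp tendsto_neg_atBot_atTop
    simpa [Function.comp_def] using this
  have key := integral_of_hasDerivAt_of_tendsto hderiv hint hbot htop
  rw [sub_zero] at key
  rw [integral_add ((integrable_exp_neg_mul_sq hb).const_mul _) (myInt_sq hb),
    integral_const_mul, integral_gaussian] at key
  have h2b : (2*b) ≠ 0 := by positivity
  field_simp at key ⊢
  linarith


section Gauss
variable {v : ℝ≥0}

lemma gaussPDF_eq (hv : v ≠ 0) (x : ℝ) :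
    gaussianPDFReal 0 v x = (Real.sqrt (2 * π * v))⁻¹ * Real.exp (-(2 * (v:ℝ))⁻¹ * x ^ 2) := by
  have hv' : (0:ℝ) < v := by positivity
  rw [gaussianPDFReal]
  congr 1
  rw [sub_zero]
  congr 1
  field_simp

lemma gauss_transfer (hv : v ≠ 0) (g : ℝ → ℝ) :
    ∫ x, g x ∂(gaussianReal 0 v) = ∫ x, gaussianPDFReal 0 v x * g x := by
  rw [gaussianReal_of_var_ne_zero 0 hv]
  have h : (gaussianPDF 0 v) = fun x => ((Real.toNNReal (gaussianPDFReal 0 v x) : ℝ≥0) : ℝ≥0∞) := by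
    ext x; simp [gaussianPDF, ENNReal.ofReal]
  rw [h]
  rw [integral_withDensity_eq_integral_smul (f := fun x => (gaussianPDFReal 0 v x).toNNReal)
    ((measurable_gaussianPDFReal 0 v).real_toNNReal) g]
  congr 1
  ext x
  simp [NNReal.smul_def, Real.coe_toNNReal _ (gaussianPDFReal_nonneg 0 v x)]

lemma gauss_integrable_transfer (hv : v ≠ 0) (g : ℝ → ℝ) :
    Integrable g (gaussianReal 0 v) ↔
      Integrable (fun x => gaussianPDFReal 0 v x * g x) volume := by
  rw [gaussianReal_of_var_ne_zero 0 hv]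
  have h : (gaussianPDF 0 v) = fun x => ((Real.toNNReal (gaussianPDFReal 0 v x) : ℝ≥0) : ℝ≥0∞) := by
    ext x; simp [gaussianPDF, ENNReal.ofReal]
  rw [h]
  rw [integrable_withDensity_iff_integrable_smul (f := fun x => (gaussianPDFReal 0 v x).toNNReal)
    ((measurable_gaussianPDFReal 0 v).real_toNNReal)]
  constructor <;> intro hi <;> refine hi.congr (Filter.Eventually.of_forall fun x => ?_) <;>
    simp [NNReal.smul_def, Real.coe_toNNReal _ (gaussianPDFReal_nonneg 0 v x)]

lemma my_integrable_dirac {f : ℝ → ℝ} (a : ℝ) : Integrable f (Measure.dirac a) := by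
  refine (integrable_const (f a)).congr ?_
  rw [MeasureTheory.ae_dirac_eq]
  exact Filter.eventually_pure.mpr rfl

lemma gauss_integrable_id : Integrable (fun x : ℝ => x) (gaussianReal 0 v) := by
  rcases eq_or_ne v 0 with rfl | hv
  · rw [gaussianReal_zero_var]
    exact my_integrable_dirac _
  · have hv' : (0:ℝ) < v := by positivity
    rw [gauss_integrable_transfer hv]
    have : Integrable (fun x : ℝ => (Real.sqrt (2 * π * v))⁻¹ *
        (x * Real.exp (-(2 * (v:ℝ))⁻¹ * x ^ 2))) volume :=
      (integrable_mul_exp_neg_mul_sq (by positivity)).const_mul _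
    refine this.congr (Filter.Eventually.of_forall fun x => ?_)
    simp only [gaussPDF_eq hv]
    ring

lemma gauss_integrable_sq : Integrable (fun x : ℝ => x ^ 2) (gaussianReal 0 v) := by
  rcases eq_or_ne v 0 with rfl | hv
  · rw [gaussianReal_zero_var]
    exact my_integrable_dirac _
  · have hv' : (0:ℝ) < v := by positivity
    rw [gauss_integrable_transfer hv]
    have h2 : Integrable (fun x : ℝ => x ^ 2 * Real.exp (-(2 * (v:ℝ))⁻¹ * x ^ 2)) := by
      have := integrable_rpow_mul_exp_neg_mul_sq (b := (2 * (v:ℝ))⁻¹) (by positivity)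
        (s := 2) (by norm_num)
      simpa [Real.rpow_natCast] using this
    refine (h2.const_mul ((Real.sqrt (2 * π * v))⁻¹)).congr
      (Filter.Eventually.of_forall fun x => ?_)
    simp only [gaussPDF_eq hv]
    ring

lemma gauss_mean : ∫ x, x ∂(gaussianReal 0 v) = 0 := by
  rcases eq_or_ne v 0 with rfl | hv
  · rw [gaussianReal_zero_var, integral_dirac]
  · rw [gauss_transfer hv]
    have : ∫ x : ℝ, gaussianPDFReal 0 v x * x
        = ∫ x : ℝ, (Real.sqrt (2 * π * v))⁻¹ * (x * Real.exp (-(2 * (v:ℝ))⁻¹ * x ^ 2)) := by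
      congr 1; ext x; rw [gaussPDF_eq hv]; ring
    have hv' : (0:ℝ) < v := by positivity
    rw [this, integral_const_mul, myOdd_integral_zero (b := (2 * (v:ℝ))⁻¹) (by positivity),
      mul_zero]

lemma gauss_sq_moment : ∫ x, x ^ 2 ∂(gaussianReal 0 v) = v := by
  rcases eq_or_ne v 0 with rfl | hv
  · rw [gaussianReal_zero_var, integral_dirac]
    norm_num
  · have hv' : (0:ℝ) < v := by positivity
    rw [gauss_transfer hv]
    have : ∫ x : ℝ, gaussianPDFReal 0 v x * x ^ 2
        = ∫ x : ℝ, (Real.sqrt (2 * π * v))⁻¹ * (x ^ 2 * Real.exp (-(2 * (v:ℝ))⁻¹ * x ^ 2)) := by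
      congr 1; ext x; rw [gaussPDF_eq hv]; ring
    rw [this, integral_const_mul, mySqMoment (by positivity)]
    have h1 : π / (2 * (v:ℝ))⁻¹ = 2 * π * v := by field_simp
    have h2 : 2 * (2 * (v:ℝ))⁻¹ = (v:ℝ)⁻¹ := by field_simp
    rw [h1, h2]
    have hsq : Real.sqrt (2 * π * v) ≠ 0 := by positivity
    field_simp

end Gauss

/-- The circularly-symmetric complex Gaussian distribution `CN(0, v)`:
real and imaginary parts are independent real Gaussians of variance `v/2`. -/
noncomputable def complexGaussian (v : ℝ) : Measure ℂ :=
  ((gaussianReal 0 (Real.toNNReal (v/2))).prod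
    (gaussianReal 0 (Real.toNNReal (v/2)))).map
    (fun p => (p.1 : ℂ) + (p.2 : ℂ) * Complex.I)

lemma measurable_mk : Measurable (fun p : ℝ × ℝ => (p.1 : ℂ) + (p.2 : ℂ) * Complex.I) :=
  (Complex.measurable_ofReal.comp measurable_fst).add
    ((Complex.measurable_ofReal.comp measurable_snd).mul_const _)

instance cg_prob (v : ℝ) : IsProbabilityMeasure (complexGaussian v) := by
  unfold complexGaussian
  exact Measure.isProbabilityMeasure_map measurable_mk.aemeasurable

lemma cg_map_re (v : ℝ) :
    (complexGaussian v).map Complex.re = gaussianReal 0 (Real.toNNReal (v/2)) := by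
  unfold complexGaussian
  rw [Measure.map_map Complex.measurable_re measurable_mk]
  have h : (Complex.re ∘ fun p : ℝ × ℝ => (p.1:ℂ) + (p.2:ℂ) * Complex.I) = Prod.fst := by
    ext p; simp
  rw [h, Measure.map_fst_prod]
  simp

lemma cg_map_im (v : ℝ) :
    (complexGaussian v).map Complex.im = gaussianReal 0 (Real.toNNReal (v/2)) := by
  unfold complexGaussian
  rw [Measure.map_map Complex.measurable_im measurable_mk]
  have h : (Complex.im ∘ fun p : ℝ × ℝ => (p.1:ℂ) + (p.2:ℂ) * Complex.I) = Prod.snd := by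
    ext p; simp
  rw [h, Measure.map_snd_prod]
  simp

lemma mom {Ω : Type*} [MeasurableSpace Ω] {μ : Measure Ω} (T : Ω → ℝ) (hT : Measurable T)
    {v : ℝ≥0} (hmap : μ.map T = gaussianReal 0 v) :
    Integrable T μ ∧ (∫ ω, T ω ∂μ) = 0 ∧
      Integrable (fun ω => T ω ^ 2) μ ∧ (∫ ω, T ω ^ 2 ∂μ) = (v:ℝ) := by
  have hTae : AEMeasurable T μ := hT.aemeasurable
  have hsm : AEStronglyMeasurable (fun x : ℝ => x) (μ.map T) := aestronglyMeasurable_id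
  have hsm2 : AEStronglyMeasurable (fun x : ℝ => x ^ 2) (μ.map T) :=
    (measurable_id.pow_const 2).aestronglyMeasurable
  refine ⟨?_, ?_, ?_, ?_⟩
  · have h := gauss_integrable_id (v := v)
    rw [← hmap] at h
    exact (integrable_map_measure hsm hTae).mp h
  · have h := integral_map hTae hsm
    rw [hmap] at h
    rw [← h, gauss_mean]
  · have h := gauss_integrable_sq (v := v)
    rw [← hmap] at h
    exact (integrable_map_measure hsm2 hTae).mp h
  · have h := integral_map hTae hsm2
    rw [hmap] at h
    rw [← h, gauss_sq_moment]

lemma E_sq {Ω : Type*} [MeasurableSpace Ω] (μ : Measure Ω) [IsProbabilityMeasure μ]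
    (ρ σ2 : ℝ) (hρ : 0 ≤ ρ) (hσ : 0 ≤ σ2) (X W : Ω → ℂ)
    (hXm : Measurable X) (hWm : Measurable W)
    (hX : μ.map X = complexGaussian ρ) (hW : μ.map W = complexGaussian σ2)
    (hind : IndepFun X W μ) (a : ℂ) :
    Integrable (fun ω => ‖a * X ω + W ω‖ ^ 2) μ ∧
      ∫ ω, ‖a * X ω + W ω‖ ^ 2 ∂μ = ‖a‖ ^ 2 * ρ + σ2 := by
  have hXre : μ.map (fun ω => (X ω).re) = gaussianReal 0 ((ρ/2).toNNReal) := by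
    rw [show (fun ω => (X ω).re) = Complex.re ∘ X from rfl,
      ← Measure.map_map Complex.measurable_re hXm, hX, cg_map_re]
  have hXim : μ.map (fun ω => (X ω).im) = gaussianReal 0 ((ρ/2).toNNReal) := by
    rw [show (fun ω => (X ω).im) = Complex.im ∘ X from rfl,
      ← Measure.map_map Complex.measurable_im hXm, hX, cg_map_im]
  have hWre : μ.map (fun ω => (W ω).re) = gaussianReal 0 ((σ2/2).toNNReal) := by
    rw [show (fun ω => (W ω).re) = Complex.re ∘ W from rfl,
      ← Measure.map_map Complex.measurable_re hWm, hW, cg_map_re]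
  have hWim : μ.map (fun ω => (W ω).im) = gaussianReal 0 ((σ2/2).toNNReal) := by
    rw [show (fun ω => (W ω).im) = Complex.im ∘ W from rfl,
      ← Measure.map_map Complex.measurable_im hWm, hW, cg_map_im]
  obtain ⟨IXr, _, IXr2, EXr2⟩ := mom (fun ω => (X ω).re) (Complex.measurable_re.comp hXm) hXre
  obtain ⟨IXi, _, IXi2, EXi2⟩ := mom (fun ω => (X ω).im) (Complex.measurable_im.comp hXm) hXim
  obtain ⟨IWr, EWr, IWr2, EWr2⟩ := mom (fun ω => (W ω).re) (Complex.measurable_re.comp hWm) hWre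
  obtain ⟨IWi, EWi, IWi2, EWi2⟩ := mom (fun ω => (W ω).im) (Complex.measurable_im.comp hWm) hWim
  have hcoe1 : (((ρ/2).toNNReal : ℝ≥0) : ℝ) = ρ/2 := Real.coe_toNNReal _ (by linarith)
  have hcoe2 : (((σ2/2).toNNReal : ℝ≥0) : ℝ) = σ2/2 := Real.coe_toNNReal _ (by linarith)
  have EXr2' : ∫ ω, (X ω).re ^ 2 ∂μ = ρ/2 := EXr2.trans hcoe1
  have EXi2' : ∫ ω, (X ω).im ^ 2 ∂μ = ρ/2 := EXi2.trans hcoe1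
  have EWr2' : ∫ ω, (W ω).re ^ 2 ∂μ = σ2/2 := EWr2.trans hcoe2
  have EWi2' : ∫ ω, (W ω).im ^ 2 ∂μ = σ2/2 := EWi2.trans hcoe2
  have EWr' : ∫ ω, (W ω).re ∂μ = 0 := EWr
  have EWi' : ∫ ω, (W ω).im ∂μ = 0 := EWi
  set c1 : Ω → ℝ := fun ω => a.re * (X ω).re - a.im * (X ω).im with hc1
  set c2 : Ω → ℝ := fun ω => a.re * (X ω).im + a.im * (X ω).re with hc2
  have Ic1 : Integrable c1 μ := (IXr.const_mul _).sub (IXi.const_mul _)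
  have Ic2 : Integrable c2 μ := (IXi.const_mul _).add (IXr.const_mul _)
  have hφ1 : Measurable (fun z : ℂ => a.re * z.re - a.im * z.im) :=
    (Complex.measurable_re.const_mul _).sub (Complex.measurable_im.const_mul _)
  have hφ2 : Measurable (fun z : ℂ => a.re * z.im + a.im * z.re) :=
    (Complex.measurable_im.const_mul _).add (Complex.measurable_re.const_mul _)
  have ind1 : IndepFun c1 (fun ω => (W ω).re) μ := hind.comp hφ1 Complex.measurable_re
  have ind2 : IndepFun c2 (fun ω => (W ω).im) μ := hind.comp hφ2 Complex.measurable_im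
  have Ip1 : Integrable (fun ω => c1 ω * (W ω).re) μ := ind1.integrable_mul Ic1 IWr
  have Ip2 : Integrable (fun ω => c2 ω * (W ω).im) μ := ind2.integrable_mul Ic2 IWi
  have Ep1 : ∫ ω, c1 ω * (W ω).re ∂μ = 0 := by
    have h : ∫ ω, c1 ω * (W ω).re ∂μ = (∫ ω, c1 ω ∂μ) * ∫ ω, (W ω).re ∂μ :=
      ind1.integral_fun_mul_eq_mul_integral Ic1.1 IWr.1
    rw [h, EWr', mul_zero]
  have Ep2 : ∫ ω, c2 ω * (W ω).im ∂μ = 0 := by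
    have h : ∫ ω, c2 ω * (W ω).im ∂μ = (∫ ω, c2 ω ∂μ) * ∫ ω, (W ω).im ∂μ :=
      ind2.integral_fun_mul_eq_mul_integral Ic2.1 IWi.1
    rw [h, EWi', mul_zero]
  have hfun : (fun ω => ‖a * X ω + W ω‖ ^ 2)
      = fun ω => ‖a‖ ^ 2 * ((X ω).re ^ 2 + (X ω).im ^ 2)
          + ((W ω).re ^ 2 + (W ω).im ^ 2)
          + 2 * (c1 ω * (W ω).re + c2 ω * (W ω).im) := by
    funext ω
    simp only [Complex.sq_norm, Complex.normSq_apply, Complex.add_re, Complex.add_im,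
      Complex.mul_re, Complex.mul_im, hc1, hc2]
    ring
  have I1 : Integrable (fun ω => (X ω).re ^ 2 + (X ω).im ^ 2) μ := IXr2.add IXi2
  have I2 : Integrable (fun ω => (W ω).re ^ 2 + (W ω).im ^ 2) μ := IWr2.add IWi2
  have I3 : Integrable (fun ω => c1 ω * (W ω).re + c2 ω * (W ω).im) μ := Ip1.add Ip2
  constructor
  · rw [hfun]
    exact ((I1.const_mul _).add I2).add (I3.const_mul _)
  · rw [hfun]
    have T1 : ∫ ω, (‖a‖ ^ 2 * ((X ω).re ^ 2 + (X ω).im ^ 2)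
            + ((W ω).re ^ 2 + (W ω).im ^ 2))
            + 2 * (c1 ω * (W ω).re + c2 ω * (W ω).im) ∂μ
        = (∫ ω, ‖a‖ ^ 2 * ((X ω).re ^ 2 + (X ω).im ^ 2)
              + ((W ω).re ^ 2 + (W ω).im ^ 2) ∂μ)
          + ∫ ω, 2 * (c1 ω * (W ω).re + c2 ω * (W ω).im) ∂μ :=
      integral_add ((I1.const_mul _).add I2) (I3.const_mul _)
    have T2 : ∫ ω, ‖a‖ ^ 2 * ((X ω).re ^ 2 + (X ω).im ^ 2)
            + ((W ω).re ^ 2 + (W ω).im ^ 2) ∂μ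
        = (∫ ω, ‖a‖ ^ 2 * ((X ω).re ^ 2 + (X ω).im ^ 2) ∂μ)
          + ∫ ω, (W ω).re ^ 2 + (W ω).im ^ 2 ∂μ :=
      integral_add (I1.const_mul _) I2
    have T3 : ∫ ω, ‖a‖ ^ 2 * ((X ω).re ^ 2 + (X ω).im ^ 2) ∂μ
        = ‖a‖ ^ 2 * ∫ ω, (X ω).re ^ 2 + (X ω).im ^ 2 ∂μ :=
      integral_const_mul _ _
    have T4 : ∫ ω, (X ω).re ^ 2 + (X ω).im ^ 2 ∂μ
        = (∫ ω, (X ω).re ^ 2 ∂μ) + ∫ ω, (X ω).im ^ 2 ∂μ := integral_add IXr2 IXi2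
    have T5 : ∫ ω, (W ω).re ^ 2 + (W ω).im ^ 2 ∂μ
        = (∫ ω, (W ω).re ^ 2 ∂μ) + ∫ ω, (W ω).im ^ 2 ∂μ := integral_add IWr2 IWi2
    have T6 : ∫ ω, 2 * (c1 ω * (W ω).re + c2 ω * (W ω).im) ∂μ
        = 2 * ∫ ω, c1 ω * (W ω).re + c2 ω * (W ω).im ∂μ := integral_const_mul _ _
    have T7 : ∫ ω, c1 ω * (W ω).re + c2 ω * (W ω).im ∂μ
        = (∫ ω, c1 ω * (W ω).re ∂μ) + ∫ ω, c2 ω * (W ω).im ∂μ := integral_add Ip1 Ip2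
    rw [T1, T2, T3, T4, T5, T6, T7, Ep1, Ep2, EXr2', EXi2', EWr2', EWi2']
    ring

/-- The generalized information density for i.i.d. Gaussian codebooks and SNN decoding. -/
noncomputable def infoDens (s ρ : ℝ) (hhat x y : ℂ) : ℝ :=
  -s * ‖y - hhat * x‖ ^ 2
    + s * ‖y‖ ^ 2 / (1 + s * ρ * ‖hhat‖ ^ 2)
    + Real.log (1 + s * ρ * ‖hhat‖ ^ 2)

/-- Mean of the generalized information density:
`E[ι_s(X;Y,ĥ)] = log(1 + sρ|ĥ|²) + β − α`. -/
theorem infoDens_mean {Ω : Type*} [MeasurableSpace Ω]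
    (μ : Measure Ω) [IsProbabilityMeasure μ]
    (ρ σ2 s : ℝ) (hρ : 0 ≤ ρ) (hσ : 0 ≤ σ2) (hs : 0 < s) (h hhat : ℂ)
    (X W : Ω → ℂ) (hXm : Measurable X) (hWm : Measurable W)
    (hX : μ.map X = complexGaussian ρ) (hW : μ.map W = complexGaussian σ2)
    (hind : IndepFun X W μ)
    (Y : Ω → ℂ) (hY : ∀ ω, Y ω = h * X ω + W ω)
    (α β : ℝ)
    (hα : α = s * (ρ * ‖h - hhat‖ ^ 2 + σ2))
    (hβ : β = s * (ρ * ‖h‖ ^ 2 + σ2) / (1 + s * ρ * ‖hhat‖ ^ 2)) :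
    ∫ ω, infoDens s ρ hhat (X ω) (Y ω) ∂μ
      = Real.log (1 + s * ρ * ‖hhat‖ ^ 2) + β - α := by
  obtain ⟨I1, E1⟩ := E_sq μ ρ σ2 hρ hσ X W hXm hWm hX hW hind (h - hhat)
  obtain ⟨I2, E2⟩ := E_sq μ ρ σ2 hρ hσ X W hXm hWm hX hW hind h
  set c : ℝ := 1 + s * ρ * ‖hhat‖ ^ 2 with hc
  have hfun : (fun ω => infoDens s ρ hhat (X ω) (Y ω))
      = fun ω => ((-s) * ‖(h - hhat) * X ω + W ω‖ ^ 2
          + (s / c) * ‖h * X ω + W ω‖ ^ 2) + Real.log c := by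
    funext ω
    have e1 : Y ω - hhat * X ω = (h - hhat) * X ω + W ω := by rw [hY ω]; ring
    simp only [infoDens, ← hc, e1, hY ω]
    ring
  rw [hfun]
  have T1 : ∫ ω, ((-s) * ‖(h - hhat) * X ω + W ω‖ ^ 2
          + (s / c) * ‖h * X ω + W ω‖ ^ 2) + Real.log c ∂μ
      = (∫ ω, (-s) * ‖(h - hhat) * X ω + W ω‖ ^ 2
          + (s / c) * ‖h * X ω + W ω‖ ^ 2 ∂μ)
        + ∫ _ω, Real.log c ∂μ :=
    integral_add ((I1.const_mul _).add (I2.const_mul _)) (integrable_const _)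
  have T2 : ∫ ω, (-s) * ‖(h - hhat) * X ω + W ω‖ ^ 2
          + (s / c) * ‖h * X ω + W ω‖ ^ 2 ∂μ
      = (∫ ω, (-s) * ‖(h - hhat) * X ω + W ω‖ ^ 2 ∂μ)
        + ∫ ω, (s / c) * ‖h * X ω + W ω‖ ^ 2 ∂μ :=
    integral_add (I1.const_mul _) (I2.const_mul _)
  have T3 : ∫ ω, (-s) * ‖(h - hhat) * X ω + W ω‖ ^ 2 ∂μ
      = (-s) * ∫ ω, ‖(h - hhat) * X ω + W ω‖ ^ 2 ∂μ := integral_const_mul _ _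
  have T4 : ∫ ω, (s / c) * ‖h * X ω + W ω‖ ^ 2 ∂μ
      = (s / c) * ∫ ω, ‖h * X ω + W ω‖ ^ 2 ∂μ := integral_const_mul _ _
  have T5 : ∫ _ω, Real.log c ∂μ = Real.log c := by
    rw [integral_const, probReal_univ, one_smul]
  rw [T1, T2, T3, T4, T5, E1, E2, hα, hβ]
  ring
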